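/- Let h be an admissible weight. For every odd integer T > 1 and every real X > 0, T · Σ_{k=0}^∞ (−1)^k J_{2k+1}(X) · ((2k+1)/(2T))²·h((2k+1)/(2T)) / sin((2k+1)π/(2T)) = T · Σ_{α=−(T−1)/2}^{(T−1)/2} Σ_{k ≥ 0, 2T ∤ k} e(kα/(2T)) · J_k(X) · (k/(2T))²·h(k/(2T)), where the inner sum on the right runs over all integers k ≥ 0 not divisible by 2T, and all series converge absolutely. -/

import Mathlib

open MeasureTheory

noncomputable section

/-- An admissible weight: an even entire function with rapid decay in horizontal
strips (up to `e^{π|y|/2}` growth vertically) vanishing to order at least 8 at 0. -/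
def IsAdmissible (h : ℂ → ℂ) : Prop :=
  Differentiable ℂ h ∧
  (∀ z : ℂ, h (-z) = h z) ∧
  (∀ A : ℝ, 0 ≤ A → ∃ C : ℝ, 0 < C ∧ ∀ x y : ℝ,
    ‖h (x + y * Complex.I)‖ ≤
      C * (1 + |x| + |y|) ^ (-A) * Real.exp (Real.pi * |y| / 2)) ∧
  (∀ j : ℕ, j ≤ 7 → iteratedDeriv j h 0 = 0)

/-- The weight `h_T(r) = (r/T) h(ir/T) / sinh(πr/T)`.  (At `r = 0` Lean's junk value
`0` agrees with the value obtained by continuity, since `h(0) = 0` for admissible `h`.) -/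
def weightT (h : ℂ → ℂ) (T : ℝ) (r : ℝ) : ℂ :=
  ((r : ℂ) / T) * h (Complex.I * r / T) / Complex.sinh (Real.pi * r / T)

/-- The Bessel function `J_ν(x)` of complex order `ν` at real argument `x > 0`. -/
def besselJC (ν : ℂ) (x : ℝ) : ℂ :=
  ∑' n : ℕ, (-1 : ℂ) ^ n * Complex.exp ((ν + 2 * (n : ℂ)) * (Real.log (x / 2) : ℂ)) /
    ((n.factorial : ℂ) * Complex.Gamma (ν + (n : ℂ) + 1))

/-- The classical Bessel function of nonnegative integer order. -/
def besselJ (k : ℕ) (x : ℝ) : ℝ :=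
  ∑' n : ℕ, (-1 : ℝ) ^ n * (x / 2) ^ (k + 2 * n) / ((n.factorial : ℝ) * ((n + k).factorial : ℝ))

/-!
With `T = 2n + 1` and `θ = kπ/(2T)`, the sum over `α` on the right is a Dirichlet kernel:
`∑_{|α| ≤ n} e^{2iαθ} = sin(Tθ)/sin θ = sin(kπ/2)/sin(kπ/(2T))`, where `sin θ ≠ 0` because
`2T ∤ k`. This vanishes for even `k` and equals `(-1)^m / sin((2m+1)π/(2T))` for `k = 2m + 1`,
so swapping the finite sum over `α` with the sum over `k` gives the left side. Absolute convergence
comes from `|J_k(X)| ≤ |X/2|^k e^{X²/4} / k!` and the boundedness of `h` on the real line; the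
left side then converges absolutely because its terms are finite sums of terms of the right side.
-/

open Finset
open scoped Nat Real

theorem IsAdmissible.exists_norm_le {h : ℂ → ℂ} (hh : IsAdmissible h) :
    ∃ C, ∀ x : ℝ, ‖h x‖ ≤ C := by
  obtain ⟨C, -, hC⟩ := hh.2.2.1 0 le_rfl
  exact ⟨C, fun x => by simpa using hC x 0⟩

theorem abs_besselJ_le (k : ℕ) (x : ℝ) :
    |besselJ k x| ≤ |x / 2| ^ k / k ! * Real.exp ((x / 2) ^ 2) := by
  have hexp := (NormedSpace.expSeries_div_hasSum_exp ((x / 2) ^ 2)).mul_left (|x / 2| ^ k / k !)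
  rw [← Real.exp_eq_exp_ℝ] at hexp
  rw [← Real.norm_eq_abs, besselJ]
  refine tsum_of_norm_bounded hexp fun n => ?_
  have hfact : (k ! : ℝ) ≤ (n + k)! := by exact_mod_cast Nat.factorial_le (Nat.le_add_left k n)
  rw [norm_div, norm_mul, norm_pow, norm_pow, norm_neg, norm_one, one_pow, one_mul, pow_add,
    pow_mul, Real.norm_eq_abs, sq_abs, Real.norm_of_nonneg (by positivity), div_mul_div_comm,
    mul_comm (k ! : ℝ)]
  gcongr

theorem summable_abs_besselJ_mul_sq (x : ℝ) :
    Summable fun k : ℕ => |besselJ k x| * (k : ℝ) ^ 2 := by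
  refine .of_nonneg_of_le (fun k => by positivity) (fun k => ?_)
    ((Real.summable_pow_div_factorial (2 * |x|)).mul_right (Real.exp ((x / 2) ^ 2)))
  have hk : (k : ℝ) ^ 2 ≤ 4 ^ k := by
    have : (k : ℝ) ≤ 2 ^ k := by exact_mod_cast Nat.lt_two_pow_self.le
    calc (k : ℝ) ^ 2 ≤ (2 ^ k) ^ 2 := by gcongr
      _ = 4 ^ k := by rw [← pow_mul, mul_comm, pow_mul]; norm_num
  calc |besselJ k x| * (k : ℝ) ^ 2 ≤ |x / 2| ^ k / k ! * Real.exp ((x / 2) ^ 2) * 4 ^ k :=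
        mul_le_mul (abs_besselJ_le k x) hk (by positivity) (by positivity)
    _ = (2 * |x|) ^ k / k ! * Real.exp ((x / 2) ^ 2) := by
        rw [abs_div, abs_two, mul_right_comm, div_mul_eq_mul_div, ← mul_pow]
        ring_nf

open Complex in
theorem sum_Icc_cexp_mul_sin (n : ℕ) (θ : ℂ) :
    (∑ α ∈ Icc (-(n : ℤ)) n, cexp (2 * θ * I * α)) * sin θ = sin ((2 * n + 1) * θ) := by
  induction n with
  | zero => simp
  | succ n ih =>
    have hIcc : Icc (-((n + 1 : ℕ) : ℤ)) (n + 1 : ℕ)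
        = insert (-(n + 1 : ℤ)) (insert (n + 1 : ℤ) (Icc (-(n : ℤ)) n)) := by
      ext; simp; omega
    have hcos := two_cos ((2 * n + 2) * θ)
    have hsin :
        sin ((2 * n + 3) * θ) - sin ((2 * n + 1) * θ) = 2 * cos ((2 * n + 2) * θ) * sin θ := by
      rw [show (2 * (n : ℂ) + 3) * θ = (2 * n + 2) * θ + θ by ring,
        show (2 * (n : ℂ) + 1) * θ = (2 * n + 2) * θ - θ by ring, sin_add, sin_sub]
      ring
    rw [hIcc, sum_insert (by simp; omega), sum_insert (by simp), add_mul, add_mul, ih]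
    push_cast
    rw [show 2 * θ * I * -((n : ℂ) + 1) = -((2 * n + 2) * θ) * I by ring,
      show 2 * θ * I * ((n : ℂ) + 1) = (2 * n + 2) * θ * I by ring,
      show (2 * ((n : ℂ) + 1) + 1) * θ = (2 * n + 3) * θ by ring]
    linear_combination (sin θ) * hcos.symm - hsin

theorem Real.sin_natCast_mul_pi_div_ne_zero {d k : ℕ} (hd : d ≠ 0) (hk : ¬ d ∣ k) :
    Real.sin (k * π / d) ≠ 0 := by
  rw [Ne, Real.sin_eq_zero_iff]
  rintro ⟨j, hj⟩
  have hkj : (k : ℝ) = j * d := by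
    field_simp at hj
    linarith
  exact hk (Int.natCast_dvd_natCast.mp ⟨j, by rw [mul_comm]; exact_mod_cast hkj⟩)

theorem Real.sin_odd_mul_pi_div_two (m : ℕ) : Real.sin ((2 * m + 1) * π / 2) = (-1) ^ m := by
  rw [show (2 * m + 1) * π / 2 = m * π + π / 2 by ring, Real.sin_add_pi_div_two,
    Real.cos_nat_mul_pi]

def besselWeight (h : ℂ → ℂ) (T : ℕ) (X : ℝ) (k : ℕ) : ℂ :=
  (besselJ k X : ℝ) * ((((k : ℝ) / (2 * T)) ^ 2 : ℝ)) * h (((k : ℝ) / (2 * T) : ℝ))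

def twistedTerm (h : ℂ → ℂ) (T : ℕ) (X : ℝ) (α : ℤ) (k : ℕ) : ℂ :=
  Complex.exp (2 * π * Complex.I * (((k : ℝ) * α / (2 * T) : ℝ))) *
    (besselJ k X : ℝ) * ((((k : ℝ) / (2 * T)) ^ 2 : ℝ)) * h (((k : ℝ) / (2 * T) : ℝ))

def oddTerm (h : ℂ → ℂ) (T : ℕ) (X : ℝ) (m : ℕ) : ℂ :=
  (-1 : ℂ) ^ m * (besselJ (2 * m + 1) X : ℝ) * ((((2 * (m : ℝ) + 1) / (2 * T)) ^ 2 : ℝ)) *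
    h (((2 * (m : ℝ) + 1) / (2 * T) : ℝ)) / ((Real.sin ((2 * (m : ℝ) + 1) * π / (2 * T)) : ℝ))

def oddEmbedding (T : ℕ) : ℕ ↪ {k : ℕ // ¬ 2 * T ∣ k} where
  toFun m := ⟨2 * m + 1, fun hd => by have := (dvd_mul_right 2 T).trans hd; omega⟩
  inj' a b hab := by simpa using hab

@[simp]
theorem oddEmbedding_apply (T m : ℕ) : (oddEmbedding T m : ℕ) = 2 * m + 1 := rfl

section

variable {h : ℂ → ℂ} {T : ℕ} {X : ℝ}

theorem summable_norm_besselWeight {C : ℝ} (hC : ∀ x : ℝ, ‖h x‖ ≤ C) (hT : 0 < T) :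
    Summable fun k => ‖besselWeight h T X k‖ := by
  refine .of_nonneg_of_le (fun _ => norm_nonneg _) (fun k => ?_)
    ((summable_abs_besselJ_mul_sq X).mul_right C)
  have hq : ((k : ℝ) / (2 * T)) ^ 2 ≤ (k : ℝ) ^ 2 := by
    gcongr
    exact div_le_self (by positivity) (by norm_cast; omega)
  rw [besselWeight, norm_mul, norm_mul, Complex.norm_real, Complex.norm_real, Real.norm_eq_abs,
    Real.norm_of_nonneg (by positivity)]
  gcongr
  exact hC _

theorem twistedTerm_eq (α : ℤ) (k : ℕ) :
    twistedTerm h T X α k = Complex.exp (2 * Complex.ofReal (k * π / (2 * T)) * Complex.I * α) *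
      besselWeight h T X k := by
  rw [twistedTerm, besselWeight]
  push_cast
  ring_nf

theorem norm_twistedTerm (α : ℤ) (k : ℕ) : ‖twistedTerm h T X α k‖ = ‖besselWeight h T X k‖ := by
  rw [twistedTerm_eq, norm_mul, ← Complex.ofReal_intCast, ← Complex.ofReal_ofNat,
    ← Complex.ofReal_mul, mul_right_comm, ← Complex.ofReal_mul, Complex.norm_exp_ofReal_mul_I,
    one_mul]

theorem sum_twistedTerm {n : ℕ} (hT : T = 2 * n + 1) {k : ℕ} (hk : ¬ 2 * T ∣ k) :
    ∑ α ∈ Icc (-(n : ℤ)) n, twistedTerm h T X α k =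
      (Real.sin (k * π / 2) / Real.sin (k * π / (2 * T)) : ℝ) * besselWeight h T X k := by
  have hsin : Real.sin (k * π / (2 * T)) ≠ 0 := by
    simpa using Real.sin_natCast_mul_pi_div_ne_zero (by omega) hk
  simp_rw [twistedTerm_eq, ← sum_mul]
  congr 1
  set θ : ℝ := k * π / (2 * T)
  have hTθ : k * π / 2 = (2 * n + 1) * θ := by
    simp only [θ, hT]
    push_cast
    field_simp
  rw [hTθ, Complex.ofReal_div (Real.sin _), eq_div_iff (by exact_mod_cast hsin),
    Complex.ofReal_sin, sum_Icc_cexp_mul_sin]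
  norm_cast

theorem oddTerm_eq_sum_twistedTerm {n : ℕ} (hT : T = 2 * n + 1) (m : ℕ) :
    oddTerm h T X m = ∑ α ∈ Icc (-(n : ℤ)) n, twistedTerm h T X α (oddEmbedding T m) := by
  rw [sum_twistedTerm hT (oddEmbedding T m).2, oddEmbedding_apply, Nat.cast_add_one,
    Nat.cast_mul, Nat.cast_two, Real.sin_odd_mul_pi_div_two, oddTerm, besselWeight]
  push_cast
  ring

theorem sum_twistedTerm_eq_zero_of_even {n : ℕ} (hT : T = 2 * n + 1) {k : ℕ} (hk : ¬ 2 * T ∣ k)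
    (heven : Even k) : ∑ α ∈ Icc (-(n : ℤ)) n, twistedTerm h T X α k = 0 := by
  obtain ⟨j, rfl⟩ := heven
  rw [sum_twistedTerm hT hk, show ((j + j : ℕ) : ℝ) * π / 2 = j * π by push_cast; ring,
    Real.sin_nat_mul_pi, zero_div, Complex.ofReal_zero, zero_mul]

theorem summable_norm_oddTerm {n : ℕ} (hT : T = 2 * n + 1)
    (hsummable : ∀ α ∈ Icc (-(n : ℤ)) n,
      Summable fun k : {k : ℕ // ¬ 2 * T ∣ k} => ‖twistedTerm h T X α k‖) :
    Summable fun m => ‖oddTerm h T X m‖ := by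
  refine .of_nonneg_of_le (fun _ => norm_nonneg _) (fun m => ?_)
    ((summable_sum hsummable).comp_injective (oddEmbedding T).injective)
  exact oddTerm_eq_sum_twistedTerm hT m ▸ norm_sum_le _ _

theorem tsum_oddTerm {n : ℕ} (hT : T = 2 * n + 1) :
    ∑' m, oddTerm h T X m =
      ∑' k : {k : ℕ // ¬ 2 * T ∣ k}, ∑ α ∈ Icc (-(n : ℤ)) n, twistedTerm h T X α k := by
  refine (tsum_congr (oddTerm_eq_sum_twistedTerm hT)).trans
    ((oddEmbedding T).injective.tsum_eq
      (f := fun k => ∑ α ∈ Icc (-(n : ℤ)) n, twistedTerm h T X α k) fun k hk => ?_)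
  obtain ⟨m, hm⟩ :=
    Nat.not_even_iff_odd.mp fun he => hk (sum_twistedTerm_eq_zero_of_even hT k.2 he)
  exact ⟨m, Subtype.ext hm.symm⟩

end

theorem statement16_general (h : ℂ → ℂ) (hh : IsAdmissible h) (T : ℕ) (hTodd : Odd T)
    (X : ℝ) :
    Summable (fun k : ℕ => ‖(-1 : ℂ) ^ k * (besselJ (2 * k + 1) X : ℝ) *
      ((((2 * (k : ℝ) + 1) / (2 * (T : ℝ))) ^ 2 : ℝ)) *
      h (((2 * (k : ℝ) + 1) / (2 * (T : ℝ)) : ℝ)) /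
      ((Real.sin ((2 * (k : ℝ) + 1) * Real.pi / (2 * (T : ℝ))) : ℝ))‖) ∧
    (∀ α : ℤ, α ∈ Finset.Icc (-(((T : ℤ) - 1) / 2)) (((T : ℤ) - 1) / 2) →
      Summable (fun k : {k : ℕ // ¬ (2 * T ∣ k)} =>
        ‖Complex.exp (2 * Real.pi * Complex.I *
            (((k : ℕ) : ℝ) * (α : ℝ) / (2 * (T : ℝ)) : ℝ)) *
          (besselJ k X : ℝ) * (((((k : ℕ) : ℝ) / (2 * (T : ℝ))) ^ 2 : ℝ)) *
          h ((((k : ℕ) : ℝ) / (2 * (T : ℝ)) : ℝ))‖)) ∧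
    (T : ℂ) * (∑' k : ℕ, (-1 : ℂ) ^ k * (besselJ (2 * k + 1) X : ℝ) *
      ((((2 * (k : ℝ) + 1) / (2 * (T : ℝ))) ^ 2 : ℝ)) *
      h (((2 * (k : ℝ) + 1) / (2 * (T : ℝ)) : ℝ)) /
      ((Real.sin ((2 * (k : ℝ) + 1) * Real.pi / (2 * (T : ℝ))) : ℝ))) =
    (T : ℂ) * ∑ α ∈ Finset.Icc (-(((T : ℤ) - 1) / 2)) (((T : ℤ) - 1) / 2),
      ∑' k : {k : ℕ // ¬ (2 * T ∣ k)},
        Complex.exp (2 * Real.pi * Complex.I *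
            (((k : ℕ) : ℝ) * (α : ℝ) / (2 * (T : ℝ)) : ℝ)) *
          (besselJ k X : ℝ) * (((((k : ℕ) : ℝ) / (2 * (T : ℝ))) ^ 2 : ℝ)) *
          h ((((k : ℕ) : ℝ) / (2 * (T : ℝ)) : ℝ)) := by
  obtain ⟨n, hT⟩ := hTodd
  obtain ⟨C, hC⟩ := hh.exists_norm_le
  rw [show ((T : ℤ) - 1) / 2 = n by omega]
  have hsummable (α : ℤ) :
      Summable fun k : {k : ℕ // ¬ 2 * T ∣ k} => ‖twistedTerm h T X α k‖ := by
    simp_rw [norm_twistedTerm]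
    exact (summable_norm_besselWeight hC (by omega)).comp_injective Subtype.val_injective
  refine ⟨summable_norm_oddTerm hT fun α _ => hsummable α, fun α _ => hsummable α, ?_⟩
  congr 1
  exact (tsum_oddTerm hT).trans (Summable.tsum_finsetSum fun α _ => (hsummable α).of_norm)

theorem statement16 (h : ℂ → ℂ) (hh : IsAdmissible h) (T : ℕ) (hTodd : Odd T) (hT1 : 1 < T)
    (X : ℝ) (hX : 0 < X) :
    Summable (fun k : ℕ => ‖(-1 : ℂ) ^ k * (besselJ (2 * k + 1) X : ℝ) *
      ((((2 * (k : ℝ) + 1) / (2 * (T : ℝ))) ^ 2 : ℝ)) *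
      h (((2 * (k : ℝ) + 1) / (2 * (T : ℝ)) : ℝ)) /
      ((Real.sin ((2 * (k : ℝ) + 1) * Real.pi / (2 * (T : ℝ))) : ℝ))‖) ∧
    (∀ α : ℤ, α ∈ Finset.Icc (-(((T : ℤ) - 1) / 2)) (((T : ℤ) - 1) / 2) →
      Summable (fun k : {k : ℕ // ¬ (2 * T ∣ k)} =>
        ‖Complex.exp (2 * Real.pi * Complex.I *
            (((k : ℕ) : ℝ) * (α : ℝ) / (2 * (T : ℝ)) : ℝ)) *
          (besselJ k X : ℝ) * (((((k : ℕ) : ℝ) / (2 * (T : ℝ))) ^ 2 : ℝ)) *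
          h ((((k : ℕ) : ℝ) / (2 * (T : ℝ)) : ℝ))‖)) ∧
    (T : ℂ) * (∑' k : ℕ, (-1 : ℂ) ^ k * (besselJ (2 * k + 1) X : ℝ) *
      ((((2 * (k : ℝ) + 1) / (2 * (T : ℝ))) ^ 2 : ℝ)) *
      h (((2 * (k : ℝ) + 1) / (2 * (T : ℝ)) : ℝ)) /
      ((Real.sin ((2 * (k : ℝ) + 1) * Real.pi / (2 * (T : ℝ))) : ℝ))) =
    (T : ℂ) * ∑ α ∈ Finset.Icc (-(((T : ℤ) - 1) / 2)) (((T : ℤ) - 1) / 2),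
      ∑' k : {k : ℕ // ¬ (2 * T ∣ k)},
        Complex.exp (2 * Real.pi * Complex.I *
            (((k : ℕ) : ℝ) * (α : ℝ) / (2 * (T : ℝ)) : ℝ)) *
          (besselJ k X : ℝ) * (((((k : ℕ) : ℝ) / (2 * (T : ℝ))) ^ 2 : ℝ)) *
          h ((((k : ℕ) : ℝ) / (2 * (T : ℝ)) : ℝ)) :=
  statement16_general h hh T hTodd X

end
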